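/- For every internal inductive game tree T and every action a ∈ A(T), conditional on the first sampled action of the trajectory z being a, the variance of the root value satisfies Var_z[v̂(T; z) | first action of z is a] = (σ_T(a)/q_T(a))² · Var_{z'}[v̂(T_a; z')]; consequently the expectation of this conditional variance over a ∼ q_T equals Σ_{a ∈ A(T)} (σ_T(a)²/q_T(a)) · Var_{z'}[v̂(T_a; z')]. -/

import Mathlib

/-- An inductive game tree: either a leaf carrying a utility `u`, or an internal node
carrying a nonempty finite action set `Fin (n+1)`, a subtree `child a` for each action,
a strategy distribution `σ`, a sampling distribution `q`, and baseline values `b`. -/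
inductive GameTree : Type
  | leaf (u : ℝ) : GameTree
  | node (n : ℕ) (child : Fin (n + 1) → GameTree)
      (σ : Fin (n + 1) → ℝ) (q : Fin (n + 1) → ℝ) (b : Fin (n + 1) → ℝ) : GameTree

namespace GameTree

/-- Expected utility `û`: `û(leaf u) = u` and `û(T) = Σ_a σ_T(a)·û(T_a)` at internal nodes. -/
noncomputable def eu : GameTree → ℝ
  | leaf u => u
  | node n child σ _ _ => ∑ a : Fin (n + 1), σ a * eu (child a)

/-- Validity: at every internal node, `σ` is a probability distribution and `q` is a
probability distribution with `q a > 0` for every action `a`. -/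
def Valid : GameTree → Prop
  | leaf _ => True
  | node n child σ q _ =>
      (∀ a, 0 ≤ σ a) ∧ (∑ a : Fin (n + 1), σ a = 1) ∧
      (∀ a, 0 < q a) ∧ (∑ a : Fin (n + 1), q a = 1) ∧
      (∀ a, Valid (child a))

/-- A sampled trajectory of `T`: a root-to-leaf path in the tree. -/
inductive Traj : GameTree → Type
  | leaf (u : ℝ) : Traj (.leaf u)
  | step {n : ℕ} {child : Fin (n + 1) → GameTree} {σ q b : Fin (n + 1) → ℝ}
      (astar : Fin (n + 1)) (t : Traj (child astar)) : Traj (.node n child σ q b)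

/-- Expectation `E_z[f(z)]` over the trajectory distribution (each trajectory has the
product of the `q`-probabilities of its edges as probability). -/
noncomputable def expT : (T : GameTree) → (Traj T → ℝ) → ℝ
  | leaf u, f => f (.leaf u)
  | node n child _ q _, f =>
      ∑ a : Fin (n + 1), q a * expT (child a) (fun t => f (.step a t))

/-- Variance `Var_z[f(z)]` over the trajectory distribution. -/
noncomputable def varT (T : GameTree) (f : Traj T → ℝ) : ℝ :=
  expT T (fun z => (f z - expT T f) ^ 2)

/-- Baseline-corrected sampled value `v̂(T; z) = Σ_a σ_T(a)·v̂(T, a; z)`, with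
`v̂(T, a; z) = (𝟙[a = a*]/q_T(a))·(v̂(T_a; z') − b_T(a)) + b_T(a)`. -/
noncomputable def bval : {T : GameTree} → Traj T → ℝ
  | _, .leaf u => u
  | _, @Traj.step n child σ q b astar t =>
      ∑ a : Fin (n + 1), σ a *
        ((if a = astar then (1 : ℝ) else 0) / q a * (bval t - b a) + b a)

/-- Baseline-corrected sampled action value `v̂(T, a; z)` at an internal root:
`(𝟙[a = a*]/q_T(a))·(v̂(T_a; z') − b_T(a)) + b_T(a)` where `z = a*·z'`. -/
noncomputable def bvalAct {n : ℕ} {child : Fin (n + 1) → GameTree}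
    {σ q b : Fin (n + 1) → ℝ}
    (a : Fin (n + 1)) : Traj (.node n child σ q b) → ℝ
  | .step astar t => (if a = astar then (1 : ℝ) else 0) / q a * (bval t - b a) + b a

/-- Conditional expectation `E_z[f(z) | first sampled action of z is a]`: the expectation
over the trajectory distribution restricted to trajectories beginning with `a`. -/
noncomputable def condExp {n : ℕ} {child : Fin (n + 1) → GameTree}
    {σ q b : Fin (n + 1) → ℝ}
    (a : Fin (n + 1)) (f : Traj (.node n child σ q b) → ℝ) : ℝ :=
  expT (child a) (fun t => f (.step a t))

/-- Conditional variance `Var_z[f(z) | first sampled action of z is a]`. -/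
noncomputable def condVar {n : ℕ} {child : Fin (n + 1) → GameTree}
    {σ q b : Fin (n + 1) → ℝ}
    (a : Fin (n + 1)) (f : Traj (.node n child σ q b) → ℝ) : ℝ :=
  expT (child a) (fun t => (f (.step a t) - condExp a f) ^ 2)

end GameTree


namespace GameTree

lemma expT_affine : ∀ (T : GameTree), Valid T → ∀ (c d : ℝ) (f : Traj T → ℝ),
    expT T (fun t => c * f t + d) = c * expT T f + d := by
  intro T
  induction T with
  | leaf u => intro _ c d f; simp [expT]
  | node n child σ q b ih =>
    intro hV c d f
    obtain ⟨_, _, _, hq1, hVc⟩ := hV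
    simp only [expT]
    have h : ∀ a : Fin (n+1),
        expT (child a) (fun t => c * f (.step a t) + d)
          = c * expT (child a) (fun t => f (.step a t)) + d :=
      fun a => ih a (hVc a) c d _
    simp only [h]
    rw [Finset.sum_congr rfl (fun a _ => mul_add (q a) _ d),
      Finset.sum_add_distrib, ← Finset.sum_mul, hq1, one_mul, Finset.mul_sum]
    congr 1
    exact Finset.sum_congr rfl (fun a _ => by ring)

lemma bval_step {n : ℕ} {child : Fin (n + 1) → GameTree} {σ q b : Fin (n + 1) → ℝ}
    (a : Fin (n + 1)) (t : Traj (child a)) :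
    bval (Traj.step a t : Traj (.node n child σ q b))
      = σ a / q a * bval t + ((∑ a', σ a' * b a') - σ a / q a * b a) := by
  simp only [bval]
  rw [Finset.sum_congr rfl (fun a' _ => show
      σ a' * ((if a' = a then (1:ℝ) else 0) / q a' * (bval t - b a') + b a')
        = (if a' = a then σ a / q a * (bval t - b a) else 0) + σ a' * b a' from by
    rcases eq_or_ne a' a with h | h
    · subst h; simp; ring
    · simp [h])]
  rw [Finset.sum_add_distrib, Finset.sum_ite_eq' Finset.univ a]
  simp
  ring

end GameTree

/-- For every internal game tree and every action `a`, conditional on the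
first sampled action of the trajectory being `a`,
`Var_z[v̂(T; z) | first action is a] = (σ_T(a)/q_T(a))² · Var_{z'}[v̂(T_a; z')]`;
consequently the expectation of this conditional variance over `a ∼ q_T` equals
`Σ_a (σ_T(a)²/q_T(a)) · Var_{z'}[v̂(T_a; z')]`. -/
theorem condVar_bval (n : ℕ) (child : Fin (n + 1) → GameTree)
    (σ q b : Fin (n + 1) → ℝ)
    (hV : GameTree.Valid (.node n child σ q b)) :
    (∀ a : Fin (n + 1),
      GameTree.condVar a (fun z : GameTree.Traj (.node n child σ q b) => GameTree.bval z)
        = (σ a / q a) ^ 2 * GameTree.varT (child a) (fun z => GameTree.bval z)) ∧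
    (∑ a : Fin (n + 1), q a *
        GameTree.condVar a (fun z : GameTree.Traj (.node n child σ q b) => GameTree.bval z))
      = ∑ a : Fin (n + 1),
          σ a ^ 2 / q a * GameTree.varT (child a) (fun z => GameTree.bval z) := by
  have hV' := hV
  obtain ⟨hσ0, hσ1, hq0, hq1, hVc⟩ := hV'
  have key : ∀ a : Fin (n + 1),
      GameTree.condVar a (fun z : GameTree.Traj (.node n child σ q b) => GameTree.bval z)
        = (σ a / q a) ^ 2 * GameTree.varT (child a) (fun z => GameTree.bval z) := by
    intro a
    have hce : GameTree.condExp a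
        (fun z : GameTree.Traj (.node n child σ q b) => GameTree.bval z)
        = σ a / q a * GameTree.expT (child a) (fun t => GameTree.bval t)
          + ((∑ a', σ a' * b a') - σ a / q a * b a) := by
      unfold GameTree.condExp
      simp only [GameTree.bval_step]
      exact GameTree.expT_affine (child a) (hVc a) _ _ _
    unfold GameTree.condVar GameTree.varT
    rw [show (fun t => (GameTree.bval (GameTree.Traj.step a t : GameTree.Traj (.node n child σ q b))
          - GameTree.condExp a (fun z : GameTree.Traj (.node n child σ q b) => GameTree.bval z)) ^ 2)
        = (fun t => (σ a / q a) ^ 2 *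
            ((GameTree.bval t - GameTree.expT (child a) (fun z => GameTree.bval z)) ^ 2) + 0) from by
      funext t
      rw [GameTree.bval_step, hce]
      ring]
    rw [GameTree.expT_affine (child a) (hVc a)]
    ring
  refine ⟨key, ?_⟩
  refine Finset.sum_congr rfl (fun a _ => ?_)
  rw [key a]
  have hqa := (hq0 a).ne'
  field_simp
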